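/- arXiv:1305.3163 — 4 statements merged into one kernel-verified Lean document; each statement's English description precedes it below -/
import Mathlib

section
/- Invariant preservation for the CESK*tΞ machine: for all states ς̂ and ς̂′ of the CESK*tΞ machine and continuation stores Ξ and Ξ′, if inv(ς̂,Ξ) holds and (ς̂,Ξ) ↦ (ς̂′,Ξ′), then inv(ς̂′,Ξ′) holds. -/
open Classical

noncomputable section

abbrev Var := ℕ
abbrev Addr := ℕ
abbrev Time := ℕ

/-- Expressions of the untyped call-by-value λ-calculus. -/
inductive Expr : Type
  | var : Var → Expr
  | app : Expr → Expr → Expr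
  | lam : Var → Expr → Expr

/-- Environments: finite maps from variables to addresses. -/
abbrev Env := Var → Option Addr

/-- Values are closures (λx.e, ρ). -/
structure Value : Type where
  param : Var
  body : Expr
  env : Env

/-- The expression component of a closure (a λ-abstraction). -/
def Value.toExpr (v : Value) : Expr := .lam v.param v.body

/-- Stores map addresses to sets of values. -/
abbrev Store := Addr → Set Value

/-- σ ⊔ [a ↦ v]. -/
def Store.join (σ : Store) (a : Addr) (v : Value) : Store :=
  fun b => if b = a then insert v (σ b) else σ b

/-- ρ[x ↦ a]. -/
def Env.ext (ρ : Env) (x : Var) (a : Addr) : Env :=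
  fun y => if y = x then some a else ρ y

/-- Frames φ ::= appL(e,ρ) | appR(v). -/
inductive Frame : Type
  | appL : Expr → Env → Frame
  | appR : Value → Frame

/-- States of the CESK_t machine; a value state ⟨v,σ,κ⟩ is represented by
    control λx.e together with the closure's environment. -/
structure CESK : Type where
  e : Expr
  ρ : Env
  σ : Store
  κ : List Frame
  t : Time

/-- The step relation of the CESK_t machine.  The `alloc` and `tick` functions
    are, per assumption, invariant under changes of the continuation, so they
    are given as functions of the remaining state components. -/
inductive CStep (allocF : Expr → Env → Store → Time → Addr)
    (tickF : Expr → Env → Store → Time → Time) : CESK → CESK → Prop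
  | var {x ρ σ κ t a v} : ρ x = some a → v ∈ σ a →
      CStep allocF tickF ⟨.var x, ρ, σ, κ, t⟩
        ⟨v.toExpr, v.env, σ, κ, tickF (.var x) ρ σ t⟩
  | app {e₀ e₁ ρ σ κ t} :
      CStep allocF tickF ⟨.app e₀ e₁, ρ, σ, κ, t⟩
        ⟨e₀, ρ, σ, .appL e₁ ρ :: κ, tickF (.app e₀ e₁) ρ σ t⟩
  | appL {v : Value} {e ρ σ κ t} :
      CStep allocF tickF ⟨v.toExpr, v.env, σ, .appL e ρ :: κ, t⟩
        ⟨e, ρ, σ, .appR v :: κ, tickF v.toExpr v.env σ t⟩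
  | appR {v : Value} {x e ρ σ κ t} :
      CStep allocF tickF ⟨v.toExpr, v.env, σ, .appR ⟨x, e, ρ⟩ :: κ, t⟩
        ⟨e, ρ.ext x (allocF v.toExpr v.env σ t),
         σ.join (allocF v.toExpr v.env σ t) v, κ, tickF v.toExpr v.env σ t⟩

/-- Contexts τ = ⟨e,ρ,σ⟩_t. -/
structure Ctx : Type where
  e : Expr
  ρ : Env
  σ : Store
  t : Time

/-- Abstract continuations kh ::= ε | φ·τ. -/
inductive AKont : Type
  | eps : AKont
  | cons : Frame → Ctx → AKont

/-- Continuation stores Ξ. -/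
abbrev KStore := Ctx → Set AKont

/-- Ξ ⊔ [τ ↦ kh]. -/
def KStore.join (Ξ : KStore) (τ : Ctx) (kh : AKont) : KStore :=
  fun τ' => if τ' = τ then insert kh (Ξ τ') else Ξ τ'

/-- States of the CESK*tΞ machine. -/
structure ACESK : Type where
  e : Expr
  ρ : Env
  σ : Store
  kh : AKont
  t : Time

/-- The step relation of the CESK*tΞ machine. -/
inductive AStep (allocF : Expr → Env → Store → Time → Addr)
    (tickF : Expr → Env → Store → Time → Time) :
    ACESK × KStore → ACESK × KStore → Prop
  | var {x ρ σ kh t a v Ξ} : ρ x = some a → v ∈ σ a →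
      AStep allocF tickF (⟨.var x, ρ, σ, kh, t⟩, Ξ)
        (⟨v.toExpr, v.env, σ, kh, tickF (.var x) ρ σ t⟩, Ξ)
  | app {e₀ e₁ ρ σ kh t Ξ} :
      AStep allocF tickF (⟨.app e₀ e₁, ρ, σ, kh, t⟩, Ξ)
        (⟨e₀, ρ, σ, .cons (.appL e₁ ρ) ⟨.app e₀ e₁, ρ, σ, t⟩,
          tickF (.app e₀ e₁) ρ σ t⟩,
         Ξ.join ⟨.app e₀ e₁, ρ, σ, t⟩ kh)
  | appL {v : Value} {e ρ σ τ t Ξ} :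
      AStep allocF tickF (⟨v.toExpr, v.env, σ, .cons (.appL e ρ) τ, t⟩, Ξ)
        (⟨e, ρ, σ, .cons (.appR v) τ, tickF v.toExpr v.env σ t⟩, Ξ)
  | appR {v : Value} {x e ρ σ τ t kh Ξ} : kh ∈ Ξ τ →
      AStep allocF tickF (⟨v.toExpr, v.env, σ, .cons (.appR ⟨x, e, ρ⟩) τ, t⟩, Ξ)
        (⟨e, ρ.ext x (allocF v.toExpr v.env σ t),
          σ.join (allocF v.toExpr v.env σ t) v, kh, tickF v.toExpr v.env σ t⟩, Ξ)

/-- base(kh), relative to the program e_pgm and initial timestamp t₀. -/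
def base (epgm : Expr) (t₀ : Time) : AKont → CESK
  | .eps => ⟨epgm, fun _ => none, fun _ => ∅, [], t₀⟩
  | .cons _ τ => ⟨τ.e, τ.ρ, τ.σ, [], τ.t⟩

/-- kh ++ ε: the frame list of kh with its trailing context replaced by ε. -/
def AKont.frames : AKont → List Frame
  | .eps => []
  | .cons φ _ => [φ]

/-- The table invariant invΞ. -/
inductive InvXi (allocF : Expr → Env → Store → Time → Addr)
    (tickF : Expr → Env → Store → Time → Time) (epgm : Expr) (t₀ : Time) :
    KStore → Prop
  | empty : InvXi allocF tickF epgm t₀ (fun _ => ∅)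
  | extend {Ξ : KStore} {τ : Ctx} {K : Set AKont} :
      InvXi allocF tickF epgm t₀ Ξ →
      (∀ khc ∈ K, Relation.ReflTransGen (CStep allocF tickF)
          (base epgm t₀ khc) ⟨τ.e, τ.ρ, τ.σ, khc.frames, τ.t⟩) →
      InvXi allocF tickF epgm t₀ (fun τ' => if τ' = τ then K else Ξ τ')

/-- The state invariant inv(sh,Ξ). -/
def StInv (allocF : Expr → Env → Store → Time → Addr)
    (tickF : Expr → Env → Store → Time → Time) (epgm : Expr) (t₀ : Time)
    (sh : ACESK) (Ξ : KStore) : Prop :=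
  Relation.ReflTransGen (CStep allocF tickF)
    (base epgm t₀ sh.kh) ⟨sh.e, sh.ρ, sh.σ, sh.kh.frames, sh.t⟩ ∧
  InvXi allocF tickF epgm t₀ Ξ

def CESK.addK (s : CESK) (κ₀ : List Frame) : CESK := ⟨s.e, s.ρ, s.σ, s.κ ++ κ₀, s.t⟩

lemma CStep.lift {allocF tickF} {s s' : CESK} (κ₀ : List Frame)
    (h : CStep allocF tickF s s') :
    CStep allocF tickF (s.addK κ₀) (s'.addK κ₀) := by
  cases h with
  | var h1 h2 => exact CStep.var h1 h2
  | app => exact CStep.app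
  | appL => exact CStep.appL
  | appR => exact CStep.appR

lemma CStep.liftStar {allocF tickF} {s s' : CESK} (κ₀ : List Frame)
    (h : Relation.ReflTransGen (CStep allocF tickF) s s') :
    Relation.ReflTransGen (CStep allocF tickF) (s.addK κ₀) (s'.addK κ₀) :=
  Relation.ReflTransGen.lift (fun s : CESK => s.addK κ₀)
    (fun _ _ h => CStep.lift (allocF := allocF) (tickF := tickF) κ₀ h) _ _ h

lemma invXi_lookup {allocF tickF epgm t₀ Ξ}
    (h : InvXi allocF tickF epgm t₀ Ξ) :
    ∀ τ, ∀ khc ∈ Ξ τ, Relation.ReflTransGen (CStep allocF tickF)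
      (base epgm t₀ khc) ⟨τ.e, τ.ρ, τ.σ, khc.frames, τ.t⟩ := by
  induction h with
  | empty => intro τ khc hm; exact absurd hm (Set.notMem_empty _)
  | @extend Ξ₀ τ K _ hK ih =>
    intro τ' khc hm
    by_cases hτ : τ' = τ
    · subst hτ; simp only [if_pos rfl] at hm; exact hK khc hm
    · exact ih τ' khc (by simpa [hτ] using hm)

/-- Lemma (CESK*tΞ Invariant): a step of the CESK*tΞ machine preserves inv. -/
theorem inv_preserved
    (allocF : Expr → Env → Store → Time → Addr)
    (tickF : Expr → Env → Store → Time → Time)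
    (epgm : Expr) (t₀ : Time)
    (sh sh' : ACESK) (Ξ Ξ' : KStore)
    (hinv : StInv allocF tickF epgm t₀ sh Ξ)
    (hstep : AStep allocF tickF (sh, Ξ) (sh', Ξ')) :
    StInv allocF tickF epgm t₀ sh' Ξ' := by
  obtain ⟨hreach, hXi⟩ := hinv
  cases hstep with
  | var h1 h2 =>
    exact ⟨hreach.tail (CStep.var h1 h2), hXi⟩
  | app =>
    rename_i e₀ e₁ ρ σ kh t
    constructor
    · exact Relation.ReflTransGen.single CStep.app
    · have hK : ∀ khc ∈ insert kh (Ξ ⟨.app e₀ e₁, ρ, σ, t⟩),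
          Relation.ReflTransGen (CStep allocF tickF)
            (base epgm t₀ khc) ⟨.app e₀ e₁, ρ, σ, khc.frames, t⟩ := by
        intro khc hm
        rcases hm with rfl | hm
        · exact hreach
        · exact invXi_lookup hXi _ khc hm
      have := InvXi.extend (τ := ⟨.app e₀ e₁, ρ, σ, t⟩)
        (K := insert kh (Ξ ⟨.app e₀ e₁, ρ, σ, t⟩)) hXi hK
      convert this using 1
      funext τ'
      by_cases h : τ' = (⟨.app e₀ e₁, ρ, σ, t⟩ : Ctx) <;>
        simp [KStore.join, h]
  | appL =>
    exact ⟨hreach.tail CStep.appL, hXi⟩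
  | appR hm =>
    rename_i v x e ρ σ τ t kh
    refine ⟨?_, hXi⟩
    have h1 := invXi_lookup hXi τ kh hm
    have h2 := CStep.liftStar kh.frames hreach
    simp only [CESK.addK, base, AKont.frames, List.nil_append] at h2
    have h3 := h1.trans h2
    exact h3.tail (CStep.appR)
end
end

section
/- Soundness of the CESK*tΞ machine with respect to the CESK_t machine: suppose ς ↦CESKt ς′, where ς has continuation κ and ς′ has continuation κ′. Let κ̂ be an abstract continuation and Ξ a continuation store such that inv(ς{κ := κ̂}, Ξ) holds and κ ∈ unroll(Ξ,κ̂). Then there exist Ξ′ and κ̂′ such that (ς{κ := κ̂}, Ξ) ↦ (ς′{κ := κ̂′}, Ξ′) in the CESK*tΞ machine and κ′ ∈ unroll(Ξ′,κ̂′). -/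
open Classical

noncomputable section

/-- Unrolling of abstract continuations into frame lists. -/
inductive Unroll (Ξ : KStore) : AKont → List Frame → Prop
  | eps : Unroll Ξ .eps []
  | cons {φ τ kh κ} : kh ∈ Ξ τ → Unroll Ξ kh κ → Unroll Ξ (.cons φ τ) (φ :: κ)

/-- ς{κ := kh}: a CESK_t state with its continuation replaced by an abstract one. -/
def setKont (ς : CESK) (kh : AKont) : ACESK := ⟨ς.e, ς.ρ, ς.σ, kh, ς.t⟩

/-- sh{kh := κ}: a CESK*tΞ state with its continuation replaced by a concrete one. -/
def setFrames (sh : ACESK) (κ : List Frame) : CESK := ⟨sh.e, sh.ρ, sh.σ, κ, sh.t⟩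

/-- Unrolling is monotone in the continuation store. -/
theorem Unroll.mono {Ξ Ξ' : KStore} (h : ∀ τ, Ξ τ ⊆ Ξ' τ) :
    ∀ {kh κ}, Unroll Ξ kh κ → Unroll Ξ' kh κ := by
  intro kh κ hu
  induction hu with
  | eps => exact .eps
  | cons hmem _ ih => exact .cons (h _ hmem) ih

/-- Soundness of the CESK*tΞ machine with respect to the CESK_t machine. -/
theorem cesk_xi_soundness
    (allocF : Expr → Env → Store → Time → Addr)
    (tickF : Expr → Env → Store → Time → Time)
    (epgm : Expr) (t₀ : Time)
    (ς ς' : CESK) (kh : AKont) (Ξ : KStore)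
    (hstep : CStep allocF tickF ς ς')
    (hinv : StInv allocF tickF epgm t₀ (setKont ς kh) Ξ)
    (hunroll : Unroll Ξ kh ς.κ) :
    ∃ (Ξ' : KStore) (kh' : AKont),
      AStep allocF tickF (setKont ς kh, Ξ) (setKont ς' kh', Ξ') ∧
      Unroll Ξ' kh' ς'.κ := by
  cases hstep with
  | var hx hv =>
      exact ⟨Ξ, kh, .var hx hv, hunroll⟩
  | app =>
      rename_i e₀ e₁ ρ σ κ t
      refine ⟨Ξ.join ⟨.app e₀ e₁, ρ, σ, t⟩ kh,
        .cons (.appL e₁ ρ) ⟨.app e₀ e₁, ρ, σ, t⟩, .app, ?_⟩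
      have hsub : ∀ τ, Ξ τ ⊆ (Ξ.join ⟨.app e₀ e₁, ρ, σ, t⟩ kh) τ := by
        intro τ x hx
        simp only [KStore.join]
        split <;> simp [hx]
      refine Unroll.cons ?_ (hunroll.mono hsub)
      simp [KStore.join]
  | appL =>
      cases hunroll with
      | cons hmem hu => exact ⟨Ξ, _, .appL, .cons hmem hu⟩
  | appR =>
      cases hunroll with
      | cons hmem hu => exact ⟨Ξ, _, .appR hmem, hu⟩
end
end

section
/- Completeness of the worklist algorithm terminal*: fix a relation ↦ on a type A satisfying the hypotheses in the context, with sets S, F, T such that T ⊆ S, post(s) = ∅ for all s ∈ T, F ∩ S = ∅, and post(s) ⊆ S ∪ F for all s ∈ S. Then for every s ∈ terminal*(S,F,T), post(s) = ∅ and there exists s₀ ∈ S ∪ F with s₀ ↦* s. -/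
/-- post(s) = { s' : s ↦ s' }. -/
def post {A : Type*} (r : A → A → Prop) (s : A) : Set A := {s' | r s s'}

/-- The worklist algorithm terminal*, presented as a big-step relation:
    `TerminalStar r S F T out` holds iff the recursion terminal*(S,F,T)
    terminates with result `out`. -/
inductive TerminalStar {A : Type*} (r : A → A → Prop) :
    Set A → Set A → Set A → Set A → Prop
  | base {S T : Set A} : TerminalStar r S ∅ T T
  | step {S F T out : Set A} : F ≠ ∅ →
      TerminalStar r (S ∪ F) ((⋃ s ∈ F, post r s) \ (S ∪ F))
        (T ∪ {s ∈ F | post r s = ∅}) out →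
      TerminalStar r S F T out

theorem terminalStar_complete_aux {A : Type*} (r : A → A → Prop) :
    ∀ {S F T out : Set A}, TerminalStar r S F T out →
    T ⊆ S →
    (∀ s ∈ T, post r s = ∅) →
    (∀ s ∈ S, post r s ⊆ S ∪ F) →
    ∀ s ∈ out, post r s = ∅ ∧ ∃ s₀ ∈ S ∪ F, Relation.ReflTransGen r s₀ s := by
  intro S F T out hterm
  induction hterm with
  | @base S T =>
    intro hTS hT _ s hs
    exact ⟨hT s hs, s, Or.inl (hTS hs), Relation.ReflTransGen.refl⟩
  | @step S F T out hF h ih =>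
    intro hTS hT hpost s hs
    have hTS' : T ∪ {s ∈ F | post r s = ∅} ⊆ S ∪ F := by
      rintro x (hx | ⟨hx, _⟩)
      · exact Or.inl (hTS hx)
      · exact Or.inr hx
    have hT' : ∀ x ∈ T ∪ {s ∈ F | post r s = ∅}, post r x = ∅ := by
      rintro x (hx | ⟨_, hx⟩)
      · exact hT x hx
      · exact hx
    have hpost' : ∀ x ∈ S ∪ F,
        post r x ⊆ (S ∪ F) ∪ ((⋃ s ∈ F, post r s) \ (S ∪ F)) := by
      rintro x (hx | hx) y hy
      · exact Or.inl (hpost x hx hy)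
      · by_cases hmem : y ∈ S ∪ F
        · exact Or.inl hmem
        · exact Or.inr ⟨Set.mem_biUnion hx hy, hmem⟩
    obtain ⟨hpost0, s₀, hs₀, hr⟩ := ih hTS' hT' hpost' s hs
    refine ⟨hpost0, ?_⟩
    rcases hs₀ with hs₀ | ⟨hs₀, -⟩
    · exact ⟨s₀, hs₀, hr⟩
    · obtain ⟨_, ⟨s₁, rfl⟩, _, ⟨hs₁, rfl⟩, hstep⟩ := hs₀
      exact ⟨s₁, Or.inr hs₁, Relation.ReflTransGen.head hstep hr⟩

/-- Completeness of the worklist algorithm terminal*. -/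
theorem terminalStar_complete {A : Type*} (r : A → A → Prop)
    (S F T out : Set A)
    (hfin : {s' | ∃ s ∈ S ∪ F, Relation.ReflTransGen r s s'}.Finite)
    (hTS : T ⊆ S)
    (hT : ∀ s ∈ T, post r s = ∅)
    (hFS : F ∩ S = ∅)
    (hpost : ∀ s ∈ S, post r s ⊆ S ∪ F)
    (hterm : TerminalStar r S F T out) :
    ∀ s ∈ out, post r s = ∅ ∧ ∃ s₀ ∈ S ∪ F, Relation.ReflTransGen r s₀ s :=
  terminalStar_complete_aux r hterm hTS hT hpost
end

section
/- Soundness of the exactly garbage-collecting pushdown machine Γ*CESK*tΞ: suppose ς ↦ΓCESKt ς′ in the garbage-collecting CESK_t machine, inv(ς{κ := κ̂}, Ξ) holds, and the continuation κ of ς satisfies κ ∈ unroll(Ξ,κ̂). Then there exist Ξ′, κ̂′, and σ′ such that (ς{κ := κ̂}, Ξ) ↦Γ* (ς̂′, Ξ′) where ς̂′ = ς′{κ := κ̂′, σ := σ′}, the continuation κ′ of ς′ satisfies κ′ ∈ unroll(Ξ′,κ̂′), and there exists L ∈ live*(ς̂′,Ξ′) such that σ′ restricted to L equals the store of ς′ restricted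 to live(ς′). -/
open Classical

noncomputable section

/-- Free variables of an expression. -/
def fv : Expr → Set Var
  | .var x => {x}
  | .app e₀ e₁ => fv e₀ ∪ fv e₁
  | .lam x e => fv e \ {x}

/-- T(e,ρ) = { ρ(x) : x ∈ fv(e) }. -/
def touchE (e : Expr) (ρ : Env) : Set Addr := {a | ∃ x ∈ fv e, ρ x = some a}

/-- Addresses touched by a value. -/
def touchV (v : Value) : Set Addr := touchE v.toExpr v.env

/-- Addresses touched by a frame. -/
def touchF : Frame → Set Addr
  | .appL e ρ => touchE e ρ
  | .appR v => touchV v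

/-- a ⇝_σ b. -/
def ptsTo (σ : Store) (a b : Addr) : Prop := ∃ v ∈ σ a, b ∈ touchV v

/-- R(root, σ): addresses reachable from the roots through the store. -/
def reach (root : Set Addr) (σ : Store) : Set Addr :=
  {b | ∃ a ∈ root, Relation.ReflTransGen (ptsTo σ) a b}

/-- σ|_L: the store restricted to domain L. -/
def restrict (σ : Store) (L : Set Addr) : Store :=
  fun a => {v | a ∈ L ∧ v ∈ σ a}

/-- Concrete live-address computation KLL* on frame lists. -/
def kll : List Frame → Set Addr → Set Addr
  | [], L => L
  | φ :: κ, L => kll κ (L ∪ touchF φ)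

/-- Terms of the abstract rewrite system for stack liveness. -/
inductive KTerm : Type
  | run : AKont → Set Addr → KTerm
  | done : Set Addr → KTerm

/-- The abstract rewrite relation on KLL* terms. -/
inductive KStepR (Ξ : KStore) : KTerm → KTerm → Prop
  | eps {L} : KStepR Ξ (.run .eps L) (.done L)
  | cons {φ τ kh L} : kh ∈ Ξ τ →
      KStepR Ξ (.run (.cons φ τ) L) (.run kh (L ∪ touchF φ))

/-- K̂LL(Ξ,kh): terminal results of the abstract rewrite system, started
    with L = ∅. -/
def KhatLL (Ξ : KStore) (kh : AKont) : Set (Set Addr) :=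
  {L' | Relation.ReflTransGen (KStepR Ξ) (.run kh ∅) (.done L')}

/-- live(ς): live addresses of a CESK_t state. -/
def liveC (ς : CESK) : Set Addr := reach (touchE ς.e ς.ρ ∪ kll ς.κ ∅) ς.σ

/-- Γ(ς): garbage collect a CESK_t state. -/
def gcC (ς : CESK) : CESK := ⟨ς.e, ς.ρ, restrict ς.σ (liveC ς), ς.κ, ς.t⟩

/-- The garbage-collecting CESK_t machine ↦ΓCESKt. -/
def CStepGC (allocF : Expr → Env → Store → Time → Addr)
    (tickF : Expr → Env → Store → Time → Time) : CESK → CESK → Prop :=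
  fun ς ς'' => ∃ ς', CStep allocF tickF ς ς' ∧ ς'' = gcC ς'

/-- live*(sh,Ξ): possible live-address sets of an abstract state. -/
def liveStar (sh : ACESK) (Ξ : KStore) : Set (Set Addr) :=
  {L' | ∃ L ∈ KhatLL Ξ sh.kh, L' = reach (touchE sh.e sh.ρ ∪ L) sh.σ}

/-- Γ*(sh,Ξ): the exactly-collected variants of an abstract state. -/
def gcStar (sh : ACESK) (Ξ : KStore) : Set ACESK :=
  {sh' | ∃ L ∈ liveStar sh Ξ, sh' = ⟨sh.e, sh.ρ, restrict sh.σ L, sh.kh, sh.t⟩}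

/-- The exactly garbage-collecting pushdown machine ↦Γ*. -/
def AStepGC (allocF : Expr → Env → Store → Time → Addr)
    (tickF : Expr → Env → Store → Time → Time) :
    ACESK × KStore → ACESK × KStore → Prop :=
  fun p q => ∃ sh', AStep allocF tickF p (sh', q.2) ∧ q.1 ∈ gcStar sh' q.2

lemma unroll_kll {Ξ : KStore} {kh κ} (h : Unroll Ξ kh κ) :
    ∀ L, Relation.ReflTransGen (KStepR Ξ) (.run kh L) (.done (kll κ L)) := by
  induction h with
  | eps => intro L; exact Relation.ReflTransGen.single .eps
  | cons hmem _ ih => intro L; exact Relation.ReflTransGen.head (KStepR.cons hmem) (ih _)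

lemma unroll_mono {Ξ Ξ' : KStore} (hsub : ∀ τ, Ξ τ ⊆ Ξ' τ) {kh κ}
    (h : Unroll Ξ kh κ) : Unroll Ξ' kh κ := by
  induction h with
  | eps => exact .eps
  | cons hmem _ ih => exact .cons (hsub _ hmem) ih

lemma pack (allocF : Expr → Env → Store → Time → Addr)
    (tickF : Expr → Env → Store → Time → Time)
    (ς₁ : CESK) (kh' : AKont) (Ξ' : KStore) (p : ACESK × KStore)
    (hA : AStep allocF tickF p (setKont ς₁ kh', Ξ'))
    (hU : Unroll Ξ' kh' ς₁.κ) :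
    ∃ (Ξ'' : KStore) (kh'' : AKont) (σ' : Store),
      AStepGC allocF tickF p (⟨(gcC ς₁).e, (gcC ς₁).ρ, σ', kh'', (gcC ς₁).t⟩, Ξ'') ∧
      Unroll Ξ'' kh'' (gcC ς₁).κ ∧
      ∃ L ∈ liveStar ⟨(gcC ς₁).e, (gcC ς₁).ρ, σ', kh'', (gcC ς₁).t⟩ Ξ'',
        restrict σ' L = restrict (gcC ς₁).σ (liveC (gcC ς₁)) := by
  refine ⟨Ξ', kh', restrict ς₁.σ (liveC ς₁), ?_, hU, ?_⟩
  · exact ⟨setKont ς₁ kh', hA,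
      ⟨liveC ς₁, ⟨kll ς₁.κ ∅, unroll_kll hU ∅, rfl⟩, rfl⟩⟩
  · exact ⟨reach (touchE ς₁.e ς₁.ρ ∪ kll ς₁.κ ∅) (restrict ς₁.σ (liveC ς₁)),
      ⟨kll ς₁.κ ∅, unroll_kll hU ∅, rfl⟩, rfl⟩

/-- Soundness of the exactly garbage-collecting pushdown machine Γ*CESK*tΞ. -/
theorem gc_exact_soundness
    (allocF : Expr → Env → Store → Time → Addr)
    (tickF : Expr → Env → Store → Time → Time)
    (epgm : Expr) (t₀ : Time)
    (ς ς' : CESK) (kh : AKont) (Ξ : KStore)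
    (hstep : CStepGC allocF tickF ς ς')
    (hinv : StInv allocF tickF epgm t₀ (setKont ς kh) Ξ)
    (hunroll : Unroll Ξ kh ς.κ) :
    ∃ (Ξ' : KStore) (kh' : AKont) (σ' : Store),
      AStepGC allocF tickF (setKont ς kh, Ξ) (⟨ς'.e, ς'.ρ, σ', kh', ς'.t⟩, Ξ') ∧
      Unroll Ξ' kh' ς'.κ ∧
      ∃ L ∈ liveStar ⟨ς'.e, ς'.ρ, σ', kh', ς'.t⟩ Ξ',
        restrict σ' L = restrict ς'.σ (liveC ς') := by
  obtain ⟨ς₁, hC, hgc⟩ := hstep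
  subst hgc
  cases hC with
  | @var x ρ σ κ t a v ha hv =>
      exact pack allocF tickF _ kh Ξ _ (AStep.var ha hv) hunroll
  | @app e₀ e₁ ρ σ κ t =>
      refine pack allocF tickF _ (.cons (.appL e₁ ρ) ⟨.app e₀ e₁, ρ, σ, t⟩)
        (Ξ.join ⟨.app e₀ e₁, ρ, σ, t⟩ kh) _ AStep.app ?_
      refine Unroll.cons ?_ (unroll_mono ?_ hunroll)
      · simp [KStore.join]
      · intro τ' kh₂ h
        simp only [KStore.join]
        split
        · exact Set.mem_insert_iff.mpr (Or.inr h)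
        · exact h
  | @appL v e ρ σ κ t =>
      cases hunroll with
      | @cons φ τ kh₂ κ' hmem hun =>
          exact pack allocF tickF _ (.cons (.appR v) τ) Ξ _ AStep.appL
            (Unroll.cons hmem hun)
  | @appR v x e ρ σ κ t =>
      cases hunroll with
      | @cons φ τ kh₂ κ' hmem hun =>
          exact pack allocF tickF _ kh₂ Ξ _ (AStep.appR hmem) hun
end
end
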